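/- In any LM_{n+1}-algebra, with J_n(x) = φ_1(x) and J_i(x) = φ_{n-i+1}(x) ∧ (φ_{n-i}(x))* for i ∈ [n-1], the determination principle holds for the J's: if J_i(x) = J_i(y) for all i ∈ [n], then x = y. -/

import Mathlib

/-!
Since `φ_k x ≤ φ_{k+1} x` and `φ_k x ⊔ (φ_k x)* = 1`, distributivity gives
`φ_{k+1} x = (φ_{k+1} x ⊓ (φ_k x)*) ⊔ φ_k x = J_{n-k} x ⊔ φ_k x`. Starting from
`φ_1 = J_n`, the `J`'s therefore determine every `φ_k x`, and (L6) determines `x`.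
-/

/-- The operations `J_1, …, J_n` of an `LM_{n+1}`-algebra, defined from the Chrysippian
endomorphisms by `J_n(x) = φ_1(x)` and `J_i(x) = φ_{n-i+1}(x) ⊓ (φ_{n-i}(x))*` for
`i ∈ [n-1]`.  Indices are `0`-based: the paper's `J_{i+1}` is `Jop n φ s i`, so that the
paper's `φ_{n-i+1}` is `φ i.rev`, and the extra meetand is absent exactly when `i` is the
last index. -/
def Jop {L : Type*} [Lattice L] [OrderTop L] (n : ℕ) (φ : Fin n → L → L) (s : L → L)
    (i : Fin n) (x : L) : L :=
  φ i.rev x ⊓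
    if h : i.val + 1 < n then s (φ ⟨n - 2 - i.val, by omega⟩ x) else ⊤

theorem inf_sup_eq_left_of_le_of_sup_eq_top {L : Type*} [DistribLattice L] [BoundedOrder L]
    {a b c : L} (hba : b ≤ a) (hbc : b ⊔ c = ⊤) : a ⊓ c ⊔ b = a := by
  rw [sup_inf_right, sup_eq_left.mpr hba, sup_comm c b, hbc, inf_top_eq]

section Jop

variable {L : Type*} {n : ℕ} (φ : Fin n → L → L) (s : L → L)

theorem Jop_rev_zero [Lattice L] [OrderTop L] (hn : 0 < n) (x : L) :
    Jop n φ s (Fin.rev ⟨0, hn⟩) x = φ ⟨0, hn⟩ x := by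
  have hlast : ¬ (Fin.rev ⟨0, hn⟩ : Fin n).val + 1 < n := by simp [Fin.val_rev]; omega
  simp only [Jop, Fin.rev_rev, dif_neg hlast, inf_top_eq]

theorem Jop_rev_succ [Lattice L] [OrderTop L] (k : ℕ) (hk : k + 1 < n) (x : L) :
    Jop n φ s (Fin.rev ⟨k + 1, hk⟩) x = φ ⟨k + 1, hk⟩ x ⊓ s (φ ⟨k, by omega⟩ x) := by
  have hlast : (Fin.rev ⟨k + 1, hk⟩ : Fin n).val + 1 < n := by simp [Fin.val_rev]; omega
  have hidx : n - 2 - (Fin.rev ⟨k + 1, hk⟩ : Fin n).val = k := by simp [Fin.val_rev]; omega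
  simp only [Jop, Fin.rev_rev, dif_pos hlast, hidx]

theorem phi_succ_eq_Jop_rev_sup [DistribLattice L] [BoundedOrder L]
    (hL2 : ∀ (i : Fin n) (x : L), φ i x ⊔ s (φ i x) = ⊤)
    (hL5 : ∀ (i j : Fin n) (x : L), i ≤ j → φ i x ≤ φ j x)
    (k : ℕ) (hk : k + 1 < n) (x : L) :
    φ ⟨k + 1, hk⟩ x = Jop n φ s (Fin.rev ⟨k + 1, hk⟩) x ⊔ φ ⟨k, by omega⟩ x := by
  rw [Jop_rev_succ, inf_sup_eq_left_of_le_of_sup_eq_top (hL5 _ _ x (Fin.le_def.mpr k.le_succ))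
    (hL2 _ x)]

end Jop

theorem lm_J_determination_general (n : ℕ) (L : Type*) [DistribLattice L] [BoundedOrder L]
    (s : L → L)
    (φ : Fin n → L → L)
    (hL2 : ∀ (i : Fin n) (x : L), φ i x ⊔ s (φ i x) = ⊤)
    (hL5 : ∀ (i j : Fin n) (x : L), i ≤ j → φ i x ≤ φ j x)
    (hL6 : ∀ x y : L, (∀ i : Fin n, φ i x = φ i y) → x = y) :
    ∀ x y : L, (∀ i : Fin n, Jop n φ s i x = Jop n φ s i y) → x = y := by
  intro x y hJ
  apply hL6
  rintro ⟨k, hk⟩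
  induction k with
  | zero => simpa only [Jop_rev_zero] using hJ (Fin.rev ⟨0, hk⟩)
  | succ k ih =>
    rw [phi_succ_eq_Jop_rev_sup φ s hL2 hL5, phi_succ_eq_Jop_rev_sup φ s hL2 hL5, hJ, ih]

theorem lm_J_determination (n : ℕ) (L : Type*) [DistribLattice L] [BoundedOrder L]
    (s : L → L)
    (h_inv : ∀ x : L, s (s x) = x)
    (h_dm : ∀ x y : L, s (x ⊔ y) = s x ⊓ s y)
    (φ : Fin n → L → L)
    (hL1 : ∀ (i : Fin n) (x y : L), φ i (x ⊔ y) = φ i x ⊔ φ i y)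
    (hL2 : ∀ (i : Fin n) (x : L), φ i x ⊔ s (φ i x) = ⊤)
    (hL3 : ∀ (i j : Fin n) (x : L), φ i (φ j x) = φ j x)
    (hL4 : ∀ (i : Fin n) (x : L), φ i (s x) = s (φ i.rev x))
    (hL5 : ∀ (i j : Fin n) (x : L), i ≤ j → φ i x ≤ φ j x)
    (hL6 : ∀ x y : L, (∀ i : Fin n, φ i x = φ i y) → x = y) :
    ∀ x y : L, (∀ i : Fin n, Jop n φ s i x = Jop n φ s i y) → x = y :=
  lm_J_determination_general n L s φ hL2 hL5 hL6
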